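/- arXiv:1511.05221 — 4 statements merged into one kernel-verified Lean document; each statement's English description precedes it below -/
import Mathlib

section
/- In any algebra satisfying C0–C3, C5 and C7, for all i ≠ j and all x: d_{ij} · c_i(d_{ij} · x) ≤ x. -/
theorem inf_le_of_le_map_of_map_inf_map_inf_compl_eq_bot {B : Type*} [BooleanAlgebra B]
    {f : B → B} (hf : ∀ y, y ≤ f y) {a x : B} (h : f (a ⊓ x) ⊓ f (a ⊓ xᶜ) = ⊥) :
    a ⊓ f (a ⊓ x) ≤ x := by
  rw [← disjoint_compl_right_iff, disjoint_iff_inf_le, ← h]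
  calc a ⊓ f (a ⊓ x) ⊓ xᶜ = f (a ⊓ x) ⊓ (a ⊓ xᶜ) := by ac_rfl
    _ ≤ f (a ⊓ x) ⊓ f (a ⊓ xᶜ) := inf_le_inf_left _ (hf _)

theorem stmt_4_general {n : ℕ} {B : Type*} [BooleanAlgebra B]
    (c : Fin n → B → B) (d : Fin n → Fin n → B)
    (hC2 : ∀ (i : Fin n) (x : B), x ≤ c i x)
    (hC7 : ∀ (i j : Fin n) (x : B), i ≠ j → c i (d i j ⊓ x) ⊓ c i (d i j ⊓ xᶜ) = ⊥) :
    ∀ (i j : Fin n) (x : B), i ≠ j → d i j ⊓ c i (d i j ⊓ x) ≤ x :=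
  fun i j x hij => inf_le_of_le_map_of_map_inf_map_inf_compl_eq_bot (hC2 i) (hC7 i j x hij)

/-- In any algebra satisfying C0–C3, C5 and C7: for all `i ≠ j` and all `x`,
`d i j ⊓ c i (d i j ⊓ x) ≤ x`. -/
theorem stmt_4 {n : ℕ} {B : Type*} [BooleanAlgebra B]
    (c : Fin n → B → B) (d : Fin n → Fin n → B)
    (hC1 : ∀ i : Fin n, c i ⊥ = ⊥)
    (hC2 : ∀ (i : Fin n) (x : B), x ≤ c i x)
    (hC3 : ∀ (i : Fin n) (x y : B), c i (x ⊓ c i y) = c i x ⊓ c i y)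
    (hC5 : ∀ i : Fin n, d i i = ⊤)
    (hC7 : ∀ (i j : Fin n) (x : B), i ≠ j → c i (d i j ⊓ x) ⊓ c i (d i j ⊓ xᶜ) = ⊥) :
    ∀ (i j : Fin n) (x : B), i ≠ j → d i j ⊓ c i (d i j ⊓ x) ≤ x :=
  stmt_4_general c d hC2 hC7
end

section
/- Let S = ⟨S, T_i, E_{ij}⟩ be a structure of type cat_n in which each T_i is an equivalence relation (AS1) and each E_{ii} = S (AS2). Then Cm(S) satisfies axiom C7, i.e. T_i*(E_{ij} ∩ X) ∩ T_i*(E_{ij} ∩ (S \ X)) = ∅ for all X ⊆ S and i ≠ j, if and only if S satisfies AS5: the restriction of T_i to E_{ij} × E_{ij} is contained in the identity relation, for all i ≠ j. -/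
/-!
Write `R = T i` and `A = E i j`. Two `R`-related points `x ≠ y` of `A` are separated by
`X = {x}`: `x ∈ A ∩ X` and `y ∈ A ∩ Xᶜ` both reach `y`, by `R x y` and by reflexivity.
Conversely, if `z` is reached from `x ∈ A ∩ X` and from `y ∈ A ∩ Xᶜ`, then symmetry and
transitivity give `R x y`, and AS5 forces `x = y`, which cannot lie both in `X` and in `Xᶜ`.
-/

/-- The cylindrification operation of the complex algebra `Cm(S)`. -/
def cstar {S : Type*} (T : S → S → Prop) (X : Set S) : Set S := {y | ∃ x ∈ X, T x y}

section Cylindrification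

variable {S : Type*} {R : S → S → Prop} {A : Set S}

theorem eq_of_cstar_inter_cstar_compl_eq_empty [Std.Refl R]
    (h : ∀ X : Set S, cstar R (A ∩ X) ∩ cstar R (A ∩ Xᶜ) = ∅)
    {x y : S} (hxy : R x y) (hx : x ∈ A) (hy : y ∈ A) : x = y := by
  by_contra hne
  have hy_mem : y ∈ cstar R (A ∩ {x}) ∩ cstar R (A ∩ {x}ᶜ) :=
    ⟨⟨x, ⟨hx, rfl⟩, hxy⟩, ⟨y, ⟨hy, Ne.symm hne⟩, refl y⟩⟩
  simp [h {x}] at hy_mem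

theorem cstar_inter_cstar_compl_eq_empty [Std.Symm R] [IsTrans S R]
    (h : ∀ x y : S, R x y → x ∈ A → y ∈ A → x = y) (X : Set S) :
    cstar R (A ∩ X) ∩ cstar R (A ∩ Xᶜ) = ∅ := by
  refine Set.eq_empty_of_forall_notMem ?_
  rintro z ⟨⟨x, ⟨hxA, hxX⟩, hxz⟩, ⟨y, ⟨hyA, hyX⟩, hyz⟩⟩
  have hxy : x = y := h x y (_root_.trans hxz (symm hyz)) hxA hyA
  exact hyX (hxy ▸ hxX)

theorem cstar_inter_cstar_compl_eq_empty_iff (hR : Equivalence R) :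
    (∀ X : Set S, cstar R (A ∩ X) ∩ cstar R (A ∩ Xᶜ) = ∅) ↔
      ∀ x y : S, R x y → x ∈ A → y ∈ A → x = y := by
  have := hR.stdRefl
  have := hR.stdSymm
  have := hR.isTrans
  exact ⟨fun h _ _ => eq_of_cstar_inter_cstar_compl_eq_empty h, cstar_inter_cstar_compl_eq_empty⟩

end Cylindrification

theorem stmt_6_general {n : ℕ} {S : Type*} (T : Fin n → S → S → Prop)
    (E : Fin n → Fin n → Set S)
    (hAS1 : ∀ i : Fin n, Equivalence (T i)) :
    (∀ (i j : Fin n), i ≠ j → ∀ X : Set S,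
        cstar (T i) (E i j ∩ X) ∩ cstar (T i) (E i j ∩ Xᶜ) = ∅)
    ↔ (∀ (i j : Fin n), i ≠ j →
        ∀ x y : S, T i x y → x ∈ E i j → y ∈ E i j → x = y) :=
  forall₂_congr fun i _ => imp_congr_right fun _ => cstar_inter_cstar_compl_eq_empty_iff (hAS1 i)

/-- For a `cat_n`-structure satisfying AS1 (each `T i` an equivalence relation) and
AS2 (`E i i = S`), the complex algebra `Cm(S)` satisfies C7, i.e.
`T_i*(E_ij ∩ X) ∩ T_i*(E_ij ∩ Xᶜ) = ∅` for all `X` and `i ≠ j`, if and only if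
`S` satisfies AS5: `T i` restricted to `E i j × E i j` is contained in the identity. -/
theorem stmt_6 {n : ℕ} {S : Type*} (T : Fin n → S → S → Prop)
    (E : Fin n → Fin n → Set S)
    (hAS1 : ∀ i : Fin n, Equivalence (T i))
    (hAS2 : ∀ i : Fin n, E i i = Set.univ) :
    (∀ (i j : Fin n), i ≠ j → ∀ X : Set S,
        cstar (T i) (E i j ∩ X) ∩ cstar (T i) (E i j ∩ Xᶜ) = ∅)
    ↔ (∀ (i j : Fin n), i ≠ j →
        ∀ x y : S, T i x y → x ∈ E i j → y ∈ E i j → x = y) :=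
  stmt_6_general T E hAS1
end

section
/- In a Boolean algebra with operators of type cyl_n, every normal form of degree k+1 lies below a unique normal form of degree k; more precisely, for each σ ∈ F^{n,m}_{k+1} there is exactly one τ ∈ F^{n,m}_k with σ ≤ τ valid in all Boolean algebras with operators of type cyl_n, provided σ is satisfiable in the class (i.e. not identically 0). -/
/-- The set of atomic generators: diagonals `d i j` and the `m` free variables. -/
abbrev DAtom (n m : ℕ) : Type := Fin n × Fin n ⊕ Fin m

/-- The type of normal forms of degree `k` (for type `cyl_n` over `m` variables).
A normal form of degree `0` is a complete conjunction over `D = {d_ij} ∪ {x_0,…,x_{m-1}}`,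
i.e. it is coded by a sign function `β : D → Bool`.  A normal form of degree `k+1` is a
complete conjunction over `D` together with the cylindrifications `c i σ` of all normal
forms `σ` of degree `k`, coded by a pair of sign functions. -/
def NF (n m : ℕ) : ℕ → Type
  | 0 => DAtom n m → Bool
  | k + 1 => (DAtom n m → Bool) × (Fin n × NF n m k → Bool)

/-- Normal forms of each degree form a finite type with decidable equality. -/
def NF.inst (n m : ℕ) : ∀ k, Fintype (NF n m k) × DecidableEq (NF n m k)
  | 0 =>
    (inferInstanceAs (Fintype (DAtom n m → Bool)),
     inferInstanceAs (DecidableEq (DAtom n m → Bool)))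
  | k + 1 =>
    letI := (NF.inst n m k).1
    letI := (NF.inst n m k).2
    (inferInstanceAs (Fintype ((DAtom n m → Bool) × (Fin n × NF n m k → Bool))),
     inferInstanceAs (DecidableEq ((DAtom n m → Bool) × (Fin n × NF n m k → Bool))))

instance (n m k : ℕ) : Fintype (NF n m k) := (NF.inst n m k).1
instance (n m k : ℕ) : DecidableEq (NF n m k) := (NF.inst n m k).2

/-- Evaluation of an atomic generator in an algebra of type `cyl_n`. -/
def dEval {n m : ℕ} {B : Type*} (d : Fin n → Fin n → B) (v : Fin m → B) :
    DAtom n m → B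
  | .inl (i, j) => d i j
  | .inr i => v i

/-- Evaluation of a normal form of degree `k` in a Boolean algebra with operators
`c i` and constants `d i j`, under the evaluation `v` of the variables. -/
def nfEval {n m : ℕ} {B : Type*} [BooleanAlgebra B] (c : Fin n → B → B)
    (d : Fin n → Fin n → B) (v : Fin m → B) : ∀ k, NF n m k → B
  | 0, β =>
      Finset.univ.inf fun a : DAtom n m =>
        if β a then dEval d v a else (dEval d v a)ᶜ
  | k + 1, σ =>
      let σ' : (DAtom n m → Bool) × (Fin n × NF n m k → Bool) := σ
      (Finset.univ.inf fun a : DAtom n m =>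
        if σ'.1 a then dEval d v a else (dEval d v a)ᶜ) ⊓
      Finset.univ.inf fun p : Fin n × NF n m k =>
        if σ'.2 p then c p.1 (nfEval c d v k p.2)
        else (c p.1 (nfEval c d v k p.2))ᶜ

/-!
Each normal form `σ` of degree `k+1` determines a normal form `⌊σ⌋` of degree `k` (`NF.proj`):
the same signs on the atoms, and `c i τ` asserted iff `σ` asserts `c i ρ` for some `ρ` with
`⌊ρ⌋ = τ`. Normal forms of a fixed degree partition unity, so by induction every `τ` is the join
of the `ρ` with `⌊ρ⌋ = τ`; by additivity `c i τ` is then the join of those `c i ρ`, which gives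
`σ ≤ ⌊σ⌋` at the cylindrification literals. Distinct normal forms are disjoint, so a satisfiable
`σ` lies below no other normal form of degree `k`.
-/

open Finset Function

variable {B : Type*} [BooleanAlgebra B]

section LitConj

variable {I : Type*} [Fintype I]

def litConj (f : I → B) (g : I → Bool) : B :=
  univ.inf fun i => if g i then f i else (f i)ᶜ

lemma litConj_le (f : I → B) (g : I → Bool) (i : I) :
    litConj f g ≤ if g i then f i else (f i)ᶜ :=
  inf_le (mem_univ i)

lemma disjoint_litConj (f : I → B) {g₁ g₂ : I → Bool} (h : g₁ ≠ g₂) :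
    Disjoint (litConj f g₁) (litConj f g₂) := by
  obtain ⟨i, hi⟩ := Function.ne_iff.mp h
  refine Disjoint.mono (litConj_le f g₁ i) (litConj_le f g₂ i) ?_
  cases h₁ : g₁ i <;> cases h₂ : g₂ i <;> simp_all [disjoint_compl_left, disjoint_compl_right]

lemma sup_litConj_eq_top [DecidableEq I] (f : I → B) : univ.sup (litConj f) = ⊤ := by
  have hpi : (⊤ : B) = univ.inf fun i => univ.sup fun b : Bool => if b then f i else (f i)ᶜ := by
    simp
  rw [eq_top_iff, hpi, inf_sup]
  refine Finset.sup_le fun g _ => le_sup_of_le (mem_univ fun i => g i (mem_univ i)) ?_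
  exact (inf_attach univ fun i => if g i (mem_univ i) then f i else (f i)ᶜ).le

end LitConj

lemma le_sup_fiber_of_le_of_pairwise_disjoint {α β : Type*} [Fintype β] [DecidableEq α]
    {a : α → B} {b : β → B} {p : β → α} (hb : univ.sup b = ⊤)
    (ha : Pairwise (Disjoint on a)) (hba : ∀ ρ, b ρ ≤ a (p ρ)) (t : α) :
    a t ≤ ({ρ | p ρ = t} : Finset β).sup b :=
  calc a t = univ.sup fun ρ => a t ⊓ b ρ := by rw [← sup_inf_distrib_left, hb, inf_top_eq]
  _ ≤ _ := Finset.sup_le fun ρ _ => by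
    by_cases h : p ρ = t
    · exact le_sup_of_le (by simpa using h) inf_le_right
    · simp [((ha (Ne.symm h)).mono_right (hba ρ)).eq_bot]

section NormalForm

variable {n m : ℕ} (c : Fin n → B → B) (d : Fin n → Fin n → B) (v : Fin m → B)

lemma nfEval_succ (k : ℕ) (σ : NF n m (k + 1)) :
    nfEval c d v (k + 1) σ = litConj (dEval d v) σ.1 ⊓
      litConj (fun p : Fin n × NF n m k => c p.1 (nfEval c d v k p.2)) σ.2 := rfl

lemma disjoint_nfEval {k : ℕ} {σ τ : NF n m k} (h : σ ≠ τ) :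
    Disjoint (nfEval c d v k σ) (nfEval c d v k τ) := by
  cases k with
  | zero => exact disjoint_litConj _ h
  | succ k =>
    rw [nfEval_succ, nfEval_succ]
    by_cases h₁ : σ.1 = τ.1
    · exact (disjoint_litConj _ fun h₂ => h (Prod.ext h₁ h₂)).mono inf_le_right inf_le_right
    · exact (disjoint_litConj _ h₁).mono inf_le_left inf_le_left

lemma sup_nfEval_eq_top (k : ℕ) : univ.sup (nfEval c d v k) = ⊤ := by
  cases k with
  | zero => exact sup_litConj_eq_top _
  | succ k =>
    change (univ ×ˢ univ).sup (fun σ : (DAtom n m → Bool) × (Fin n × NF n m k → Bool) =>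
      litConj (dEval d v) σ.1 ⊓ litConj (fun p => c p.1 (nfEval c d v k p.2)) σ.2) = ⊤
    rw [← sup_inf_sup univ univ (litConj (dEval d v)) (litConj _), sup_litConj_eq_top,
      sup_litConj_eq_top, inf_top_eq]

end NormalForm

def NF.proj {n m : ℕ} : ∀ k, NF n m (k + 1) → NF n m k
  | 0, σ => σ.1
  | k + 1, σ => (σ.1, fun p => decide (∃ ρ, proj k ρ = p.2 ∧ σ.2 (p.1, ρ) = true))

lemma nfEval_le_nfEval_proj {n m : ℕ} (c : Fin n → SupBotHom B B) (d : Fin n → Fin n → B)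
    (v : Fin m → B) (k : ℕ) (σ : NF n m (k + 1)) :
    nfEval (fun i => c i) d v (k + 1) σ ≤ nfEval (fun i => c i) d v k (NF.proj k σ) := by
  induction k with
  | zero => exact inf_le_left
  | succ k ih =>
    have fiber (t : NF n m k) := le_sup_fiber_of_le_of_pairwise_disjoint
      (sup_nfEval_eq_top _ d v (k + 1)) (fun _ _ h => disjoint_nfEval _ d v h) ih t
    rw [nfEval_succ, nfEval_succ]
    refine inf_le_inf_left _ (Finset.le_inf fun ⟨i, t⟩ _ => ?_)
    split_ifs with h
    · obtain ⟨ρ, rfl, hρ⟩ : ∃ ρ, NF.proj k ρ = t ∧ σ.2 (i, ρ) = true := by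
        simpa [NF.proj] using h
      calc _ ≤ c i (nfEval (fun i => c i) d v (k + 1) ρ) := by
            simpa [hρ] using litConj_le _ σ.2 (i, ρ)
      _ ≤ _ := OrderHomClass.mono (c i) (ih ρ)
    · have hfib : ∀ ρ, NF.proj k ρ = t → σ.2 (i, ρ) = false := by
        simpa [NF.proj] using h
      rw [le_compl_iff_disjoint_right]
      refine Disjoint.mono_right ((OrderHomClass.mono (c i) (fiber t)).trans_eq
        (map_finset_sup _ _ _)) (Finset.disjoint_sup_right.mpr fun ρ hρ => ?_)
      have hlit := litConj_le (fun p : Fin n × NF n m (k + 1) =>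
        c p.1 (nfEval (fun i => c i) d v (k + 1) p.2)) σ.2 (i, ρ)
      rw [hfib ρ (by simpa using hρ), if_neg Bool.false_ne_true] at hlit
      exact disjoint_compl_left.mono_left hlit

/-- Every normal form of degree `k+1` that is satisfiable in the class of Boolean
algebras with operators of type `cyl_n` (i.e. not identically `⊥`) lies below exactly
one normal form of degree `k`, in the sense of validity in all such algebras. -/
theorem stmt_10 (n m k : ℕ) (σ : NF n m (k + 1))
    (hsat : ∃ (B : Type) (_ : BooleanAlgebra B)
        (c : Fin n → B → B) (d : Fin n → Fin n → B) (v : Fin m → B),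
        (∀ i : Fin n, c i ⊥ = ⊥) ∧
        (∀ (i : Fin n) (x y : B), c i (x ⊔ y) = c i x ⊔ c i y) ∧
        nfEval c d v (k + 1) σ ≠ ⊥) :
    ∃! τ : NF n m k,
      ∀ (B : Type) (_ : BooleanAlgebra B)
        (c : Fin n → B → B) (d : Fin n → Fin n → B) (v : Fin m → B),
        (∀ i : Fin n, c i ⊥ = ⊥) →
        (∀ (i : Fin n) (x y : B), c i (x ⊔ y) = c i x ⊔ c i y) →
        nfEval c d v (k + 1) σ ≤ nfEval c d v k τ := by
  have below_proj (B : Type) [BooleanAlgebra B] (c : Fin n → B → B) (d : Fin n → Fin n → B)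
      (v : Fin m → B) (h0 : ∀ i, c i ⊥ = ⊥) (hadd : ∀ i x y, c i (x ⊔ y) = c i x ⊔ c i y) :
      nfEval c d v (k + 1) σ ≤ nfEval c d v k (NF.proj k σ) :=
    nfEval_le_nfEval_proj (fun i => ⟨⟨c i, hadd i⟩, h0 i⟩) d v k σ
  refine ⟨NF.proj k σ, fun B _ => below_proj B, fun τ hτ => ?_⟩
  obtain ⟨B, _, c, d, v, h0, hadd, hσ⟩ := hsat
  by_contra hne
  exact hσ <| disjoint_self.mp <|
    (disjoint_nfEval c d v hne).mono (hτ B _ c d v h0 hadd) (below_proj B c d v h0 hadd)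
end

section
/- Let S be a finite cat_n-structure satisfying AS1 (each T_i an equivalence relation), AS2 (E_{ii} = S), AS4, and AS5. Then the complex algebra Cm(S) is a finite member of WCA_n; in particular Cm(S) is a Boolean algebra with additive normal operators satisfying C2, C3, C5, WC6, C7. -/
section Cylindrification

variable {S : Type*} {T : S → S → Prop}

@[simp]
theorem mem_cstar {X : Set S} {y : S} : y ∈ cstar T X ↔ ∃ x ∈ X, T x y := Iff.rfl

@[simp]
theorem cstar_empty : cstar T ∅ = ∅ := by
  ext y
  simp

theorem cstar_union (X Y : Set S) : cstar T (X ∪ Y) = cstar T X ∪ cstar T Y := by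
  ext y
  simp only [mem_cstar, Set.mem_union, or_and_right, exists_or]

theorem subset_cstar (hT : ∀ x, T x x) (X : Set S) : X ⊆ cstar T X :=
  fun x hx => ⟨x, hx, hT x⟩

theorem cstar_inter_cstar (hT : Equivalence T) (X Y : Set S) :
    cstar T (X ∩ cstar T Y) = cstar T X ∩ cstar T Y := by
  ext y
  constructor
  · rintro ⟨x, ⟨hxX, z, hzY, hzx⟩, hxy⟩
    exact ⟨⟨x, hxX, hxy⟩, z, hzY, hT.trans hzx hxy⟩
  · rintro ⟨⟨x, hxX, hxy⟩, z, hzY, hzy⟩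
    exact ⟨x, ⟨hxX, z, hzY, hT.trans hzy (hT.symm hxy)⟩, hxy⟩

/-- Two points of `D` with a common `T`-successor are `T`-related, hence equal. -/
theorem cstar_inter_inter_cstar_inter_compl_eq_empty (hT : Equivalence T)
    {D : Set S} (hD : ∀ x y, T x y → x ∈ D → y ∈ D → x = y) (X : Set S) :
    cstar T (D ∩ X) ∩ cstar T (D ∩ Xᶜ) = ∅ := by
  refine Set.eq_empty_of_forall_notMem ?_
  rintro y ⟨⟨a, ⟨haD, haX⟩, hay⟩, b, ⟨hbD, hbX⟩, hby⟩
  obtain rfl := hD a b (hT.trans hay (hT.symm hby)) haD hbD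
  exact hbX haX

end Cylindrification

/-- For a finite `cat_n`-structure satisfying AS1, AS2, AS4 and AS5, the complex
algebra `Cm(S)` (the powerset Boolean algebra with operators `c i = T_i*` and
diagonals `E i j`) is a finite member of `WCA_n`: it is a finite Boolean algebra
whose operators are normal and additive and satisfy C2, C3, C5, WC6 and C7. -/
theorem stmt_18 {n : ℕ} {S : Type*} [Finite S]
    (T : Fin n → S → S → Prop) (E : Fin n → Fin n → Set S)
    (hAS1 : ∀ i : Fin n, Equivalence (T i))
    (hAS2 : ∀ i : Fin n, E i i = Set.univ)
    (hAS4 : ∀ i j k : Fin n, k ≠ i → k ≠ j →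
      E i j = E j i ∧ E i k ∩ E k j ⊆ E i j ∧ cstar (T k) (E i j) = E i j)
    (hAS5 : ∀ i j : Fin n, i ≠ j →
      ∀ x y : S, T i x y → x ∈ E i j → y ∈ E i j → x = y) :
    Finite (Set S) ∧
    (∀ i : Fin n, cstar (T i) ∅ = ∅) ∧
    (∀ (i : Fin n) (X Y : Set S),
      cstar (T i) (X ∪ Y) = cstar (T i) X ∪ cstar (T i) Y) ∧
    (∀ (i : Fin n) (X : Set S), X ⊆ cstar (T i) X) ∧
    (∀ (i : Fin n) (X Y : Set S),
      cstar (T i) (X ∩ cstar (T i) Y) = cstar (T i) X ∩ cstar (T i) Y) ∧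
    (∀ i : Fin n, E i i = Set.univ) ∧
    (∀ i j k : Fin n, k ≠ i → k ≠ j →
      E i k ∩ E k j ⊆ E i j ∧ E i j = E j i ∧ cstar (T k) (E j i) = E j i) ∧
    (∀ (i j : Fin n) (X : Set S), i ≠ j →
      cstar (T i) (E i j ∩ X) ∩ cstar (T i) (E i j ∩ Xᶜ) = ∅) := by
  refine ⟨inferInstance, fun i => cstar_empty, fun i => cstar_union,
    fun i => subset_cstar (hAS1 i).refl, fun i => cstar_inter_cstar (hAS1 i),
    hAS2, fun i j k hki hkj => ?_,
    fun i j X hij => cstar_inter_inter_cstar_inter_compl_eq_empty (hAS1 i) (hAS5 i j hij) X⟩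
  obtain ⟨hsymmE, hcomp, -⟩ := hAS4 i j k hki hkj
  exact ⟨hcomp, hsymmE, (hAS4 j i k hkj hki).2.2⟩
end
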